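/- Let A ∈ ℂ^{m×m} be invertible and b ∈ ℂ^m satisfy the stiff-accuracy condition b^T A^{-1} = e_m^T = (0,…,0,1). Then the Runge–Kutta method is L-stable in the limiting sense: I − zA is invertible for all z ∈ ℂ of sufficiently large modulus, and the stability function R(z) = 1 + z·b^T (I − zA)^{-1} 𝟙 tends to 0 as ‖z‖ → ∞. -/
import Mathlib


open Matrix BigOperators Filter

/-- A stiffly accurate Runge–Kutta method (`bᵀ A⁻¹ = eₘᵀ`, `A` invertible) is
L-stable in the limiting sense: `I - zA` is invertible for all `z` of
sufficiently large modulus, and the stability function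
`R(z) = 1 + z bᵀ (I - zA)⁻¹ 𝟙` tends to `0` as `‖z‖ → ∞`. -/
theorem stiffly_accurate_is_L_stable
    (m : ℕ) (A : Matrix (Fin (m + 1)) (Fin (m + 1)) ℂ) (b : Fin (m + 1) → ℂ)
    (hA : IsUnit A.det)
    (hb : Matrix.vecMul b A⁻¹ = Pi.single (Fin.last m) 1) :
    (∃ C : ℝ, ∀ z : ℂ, C < ‖z‖ → IsUnit (1 - z • A).det) ∧
    Tendsto (fun z : ℂ => 1 + z * (b ⬝ᵥ (1 - z • A)⁻¹.mulVec 1))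
      (Bornology.cobounded ℂ) (nhds 0) := by
  -- continuity of w ↦ det (A - w • 1)
  have hcont : ContinuousAt (fun w : ℂ =>
      (A - w • (1 : Matrix (Fin (m+1)) (Fin (m+1)) ℂ)).det) 0 :=
    (Continuous.matrix_det (continuous_const.sub (continuous_id.smul continuous_const))).continuousAt
  have hAd : A.det ≠ 0 := hA.ne_zero
  have h0 : (A - (0:ℂ) • (1 : Matrix (Fin (m+1)) (Fin (m+1)) ℂ)).det ≠ 0 := by simpa using hAd
  have hev : ∀ᶠ w in nhds (0:ℂ),
      (A - w • (1 : Matrix (Fin (m+1)) (Fin (m+1)) ℂ)).det ≠ 0 :=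
    hcont.eventually_ne h0
  rcases Metric.eventually_nhds_iff.mp hev with ⟨ε, hε, hball⟩
  -- key matrix identity
  have key : ∀ z : ℂ, z ≠ 0 →
      (1 : Matrix (Fin (m+1)) (Fin (m+1)) ℂ) - z • A
        = (-z) • (A - z⁻¹ • (1 : Matrix (Fin (m+1)) (Fin (m+1)) ℂ)) := by
    intro z hz
    rw [smul_sub, smul_smul, neg_mul, inv_eq_one_div, mul_one_div, div_self hz,
      neg_smul, neg_smul, sub_neg_eq_add, one_smul]
    abel
  have hball' : ∀ z : ℂ, ε⁻¹ < ‖z‖ →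
      (A - z⁻¹ • (1 : Matrix (Fin (m+1)) (Fin (m+1)) ℂ)).det ≠ 0 := by
    intro z hz
    have hz0 : z ≠ 0 := by
      intro h; rw [h, norm_zero] at hz; exact absurd hz (not_lt.2 (inv_pos.2 hε).le)
    apply hball
    rw [dist_zero_right, norm_inv]
    have h1 : (0:ℝ) < ‖z‖ := lt_trans (inv_pos.2 hε) hz
    exact (inv_lt_comm₀ hε h1).mp hz
  constructor
  · refine ⟨ε⁻¹, fun z hz => ?_⟩
    have hz0 : z ≠ 0 := by
      intro h; rw [h, norm_zero] at hz; exact absurd hz (not_lt.2 (inv_pos.2 hε).le)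
    rw [key z hz0, Matrix.det_smul, isUnit_iff_ne_zero]
    exact mul_ne_zero (pow_ne_zero _ (neg_ne_zero.2 hz0)) (hball' z hz)
  · -- the limit
    set g : ℂ → ℂ := fun w =>
      1 - b ⬝ᵥ ((A - w • (1 : Matrix (Fin (m+1)) (Fin (m+1)) ℂ))⁻¹.mulVec 1) with hg_def
    have hgc : ContinuousAt g 0 := by
      have hF : Continuous (fun M : Matrix (Fin (m+1)) (Fin (m+1)) ℂ =>
          1 - b ⬝ᵥ (M.mulVec 1)) :=
        continuous_const.sub (continuous_const.dotProduct
          (continuous_id.matrix_mulVec continuous_const))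
      exact (hF.continuousAt.comp
        ((continuousAt_matrix_inv _ (by simpa using hA)).comp
          ((continuous_const.sub (continuous_id.smul continuous_const)).continuousAt)))
    have hg0 : g 0 = 0 := by
      simp only [hg_def, zero_smul, sub_zero, Matrix.dotProduct_mulVec, hb,
        single_dotProduct, Pi.one_apply, mul_one]
      ring
    have h1 : Tendsto (fun z : ℂ => g z⁻¹) (Bornology.cobounded ℂ) (nhds 0) := by
      rw [← hg0]
      exact hgc.tendsto.comp tendsto_inv₀_cobounded
    refine h1.congr' ?_
    filter_upwards [tendsto_norm_cobounded_atTop.eventually (eventually_gt_atTop ε⁻¹)]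
      with z hz
    have hz0 : z ≠ 0 := by
      intro h; rw [h, norm_zero] at hz; exact absurd hz (not_lt.2 (inv_pos.2 hε).le)
    have hMd : IsUnit (A - z⁻¹ • (1 : Matrix (Fin (m+1)) (Fin (m+1)) ℂ)).det :=
      isUnit_iff_ne_zero.2 (hball' z hz)
    have hinv : ((1 : Matrix (Fin (m+1)) (Fin (m+1)) ℂ) - z • A)⁻¹
        = (-z⁻¹) • (A - z⁻¹ • (1 : Matrix (Fin (m+1)) (Fin (m+1)) ℂ))⁻¹ := by
      apply Matrix.inv_eq_right_inv
      rw [key z hz0, Matrix.smul_mul, Matrix.mul_smul, Matrix.mul_nonsing_inv _ hMd,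
        smul_smul]
      simp [neg_mul_neg, mul_inv_cancel₀ hz0]
    rw [hinv, Matrix.smul_mulVec, dotProduct_smul]
    simp only [hg_def, smul_eq_mul]
    field_simp
    ring
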